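/- For distinct odd primes p, q, r, Ψ_{pqr}(x) = (x - 1)·(Σ_{j=0}^{q-1} x^{jp})·(Σ_{j=0}^{r-1} x^{jq})·(Σ_{j=0}^{p-1} x^{jr}). -/

import Mathlib

/-!
Since `Ψₙ = (Xⁿ - 1)/Φₙ` and `expand p Φₙ = Φₙₚ Φₙ` for a prime `p ∤ n`, expanding `Φₙ Ψₙ = Xⁿ - 1`
by `X ↦ Xᵖ` gives `Ψₙₚ = expand p Ψₙ · Φₙ`. Two applications starting from `Ψ_p = X - 1` give
`Ψ_{pqr} = (X^{qr} - 1) Φ_p(X^r) Φ_{pq}`, and each geometric sum `∑_{j<b} X^{ja}` is `Φ_b(Xᵃ) = Φ_{ab} Φ_b` for primes `a ≠ b`.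
-/

open Polynomial

/-- The reciprocal cyclotomic polynomial Ψₙ(x) = (xⁿ - 1)/Φₙ(x). -/
noncomputable def Psi (n : ℕ) : ℤ[X] := (X ^ n - 1) /ₘ cyclotomic n ℤ

theorem cyclotomic_mul_Psi (n : ℕ) : cyclotomic n ℤ * Psi n = X ^ n - 1 := by
  have h := modByMonic_add_div (X ^ n - 1 : ℤ[X]) (cyclotomic n ℤ)
  rwa [(modByMonic_eq_zero_iff_dvd (cyclotomic.monic n ℤ)).2 (cyclotomic.dvd_X_pow_sub_one n ℤ),
    zero_add] at h

theorem Psi_eq_of_cyclotomic_mul_eq {n : ℕ} {f : ℤ[X]} (h : cyclotomic n ℤ * f = X ^ n - 1) :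
    Psi n = f := by
  rw [Psi, ← h, mul_divByMonic_cancel_left f (cyclotomic.monic n ℤ)]

theorem Psi_prime {p : ℕ} (hp : p.Prime) : Psi p = X - 1 :=
  have := Fact.mk hp
  Psi_eq_of_cyclotomic_mul_eq (cyclotomic_prime_mul_X_sub_one ℤ p)

theorem expand_X_pow_sub_one {R : Type*} [CommRing R] (m n : ℕ) :
    expand R n (X ^ m - 1) = X ^ (m * n) - 1 := by
  simp [← pow_mul, mul_comm]

theorem Psi_mul_prime {n p : ℕ} (hp : p.Prime) (hpn : ¬p ∣ n) :
    Psi (n * p) = expand ℤ p (Psi n) * cyclotomic n ℤ :=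
  Psi_eq_of_cyclotomic_mul_eq <| by
    calc cyclotomic (n * p) ℤ * (expand ℤ p (Psi n) * cyclotomic n ℤ)
        = expand ℤ p (cyclotomic n ℤ) * expand ℤ p (Psi n) := by
          rw [cyclotomic_expand_eq_cyclotomic_mul hp hpn]; ring
      _ = X ^ (n * p) - 1 := by rw [← map_mul, cyclotomic_mul_Psi, expand_X_pow_sub_one]

theorem Psi_mul_of_prime_of_prime {p q : ℕ} (hp : p.Prime) (hq : q.Prime) (hpq : p ≠ q) :
    Psi (p * q) = (X ^ q - 1) * cyclotomic p ℤ := by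
  rw [Psi_mul_prime hq ((Nat.prime_dvd_prime_iff_eq hq hp).not.2 hpq.symm), Psi_prime hp,
    ← pow_one X, expand_X_pow_sub_one, one_mul, pow_one]

theorem sum_range_X_pow_mul_eq_expand_cyclotomic {R : Type*} [CommRing R] (a : ℕ) {b : ℕ}
    (hb : b.Prime) :
    ∑ j ∈ Finset.range b, (X : R[X]) ^ (j * a) = expand R a (cyclotomic b R) := by
  have := Fact.mk hb
  simp [cyclotomic_prime, ← pow_mul, mul_comm]

theorem psi_three_primes_general (p q r : ℕ) (hp : p.Prime) (hq : q.Prime) (hr : r.Prime)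
    (hpq : p ≠ q) (hpr : p ≠ r) (hqr : q ≠ r) :
    Psi (p * q * r) =
      (X - 1) * (∑ j ∈ Finset.range q, X ^ (j * p)) *
        (∑ j ∈ Finset.range r, X ^ (j * q)) * (∑ j ∈ Finset.range p, X ^ (j * r)) := by
  have := Fact.mk hq
  have not_dvd : ∀ {a b : ℕ}, a.Prime → b.Prime → a ≠ b → ¬a ∣ b := fun ha hb hab =>
    (Nat.prime_dvd_prime_iff_eq ha hb).not.2 hab
  have hr_pq : ¬r ∣ p * q := fun h =>
    (hr.dvd_mul.1 h).elim (not_dvd hr hp hpr.symm) (not_dvd hr hq hqr.symm)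
  calc Psi (p * q * r)
      = (X ^ (q * r) - 1) * expand ℤ r (cyclotomic p ℤ) * cyclotomic (p * q) ℤ := by
        rw [Psi_mul_prime hr hr_pq, Psi_mul_of_prime_of_prime hp hq hpq, map_mul,
          expand_X_pow_sub_one]
    _ = cyclotomic (r * q) ℤ * ((X - 1) * cyclotomic q ℤ * cyclotomic r ℤ) *
          expand ℤ r (cyclotomic p ℤ) * cyclotomic (p * q) ℤ := by
        rw [mul_comm q r, ← cyclotomic_mul_Psi, Psi_mul_of_prime_of_prime hr hq hqr.symm,
          ← cyclotomic_prime_mul_X_sub_one ℤ q, mul_comm (cyclotomic q ℤ)]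
    _ = _ := by
        rw [sum_range_X_pow_mul_eq_expand_cyclotomic p hq,
          sum_range_X_pow_mul_eq_expand_cyclotomic q hr,
          sum_range_X_pow_mul_eq_expand_cyclotomic r hp,
          cyclotomic_expand_eq_cyclotomic_mul hp (not_dvd hp hq hpq),
          cyclotomic_expand_eq_cyclotomic_mul hq (not_dvd hq hr hqr), mul_comm q p]
        ring

theorem psi_three_primes (p q r : ℕ) (hp : p.Prime) (hq : q.Prime) (hr : r.Prime)
    (hop : Odd p) (hoq : Odd q) (hor : Odd r)
    (hpq : p ≠ q) (hpr : p ≠ r) (hqr : q ≠ r) :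
    Psi (p * q * r) =
      (X - 1) * (∑ j ∈ Finset.range q, X ^ (j * p)) *
        (∑ j ∈ Finset.range r, X ^ (j * q)) * (∑ j ∈ Finset.range p, X ^ (j * r)) :=
  psi_three_primes_general p q r hp hq hr hpq hpr hqr
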